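/- (Separability of the induction functor from an integral; the '⇐' direction of the theorem characterizing separability of − ⊗_A C, specialized to the coring of an entwining structure.) Let (A,C)_ψ be an entwining structure and suppose e ∈ A ⊗ C is a normalized integral, i.e. act(e ⊗ a) = a·e for all a ∈ A (where a·(a' ⊗ c) := (aa') ⊗ c) and (A ⊗ ε)(e) = 1. Then for every right A-module M, the k-linear map ν_M : M → M ⊗ C defined by ν_M(m) = (ρ_M ⊗ C)(m ⊗ e) (i.e. ν_M(m) = Σ_j m·a_j ⊗ c_j if e = Σ_j a_j ⊗ c_j, where ρ_M denotes the right A-action on M) satisfies: (1) (M ⊗ ε) ∘ ν_M = id_M; (2) ν_M(m·a) = act^M(ν_M(m) ⊗ a) for all m ∈ M, a ∈ A, where act^M((m ⊗ c) ⊗ a) := (ρ_M ⊗ C)(m ⊗ ψ(c ⊗ a)); (3) for every right A-module map f : M → N, (f ⊗ C) ∘ ν_M = ν_N ∘ f. -/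
import Mathlib


/-!
STATEMENT 9: For an entwining structure (A,C)_ψ with a normalized integral
e ∈ A ⊗ C, the maps ν_M(m) = (ρ_M ⊗ C)(m ⊗ e) give a natural splitting.
Right A-modules (compatible with the k-structure) are modelled as k-modules M
with a k-bilinear action smul : M →ₗ A →ₗ M satisfying the unit and
associativity laws.
-/

open TensorProduct

noncomputable section

variable {k A C M N : Type*} [CommRing k] [Ring A] [Algebra k A]
  [AddCommGroup C] [Module k C] [Coalgebra k C]
  [AddCommGroup M] [Module k M] [AddCommGroup N] [Module k N]

/-- The twisted right action `act((a' ⊗ c) ⊗ a) = (μ ⊗ C)(a' ⊗ ψ(c ⊗ a))`. -/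
def act (ψ : C ⊗[k] A →ₗ[k] A ⊗[k] C) :
    (A ⊗[k] C) ⊗[k] A →ₗ[k] A ⊗[k] C :=
  LinearMap.rTensor C (LinearMap.mul' k A) ∘ₗ
    (TensorProduct.assoc k A A C).symm.toLinearMap ∘ₗ
    LinearMap.lTensor A ψ ∘ₗ
    (TensorProduct.assoc k A C A).toLinearMap

/-- `(A ⊗ ε) : A ⊗ C → A` (composed with the canonical iso `A ⊗ k ≅ A`). -/
def epsA : A ⊗[k] C →ₗ[k] A :=
  (TensorProduct.rid k A).toLinearMap ∘ₗ
    LinearMap.lTensor A (Coalgebra.counit (R := k) (A := C))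

/-- Left multiplication by `a` on the first tensor factor of `A ⊗ C`. -/
def lmul (a : A) : A ⊗[k] C →ₗ[k] A ⊗[k] C :=
  LinearMap.rTensor C (LinearMap.mulLeft k a)

/-- `(M ⊗ ε) : M ⊗ C → M`. -/
def epsM : M ⊗[k] C →ₗ[k] M :=
  (TensorProduct.rid k M).toLinearMap ∘ₗ
    LinearMap.lTensor M (Coalgebra.counit (R := k) (A := C))

/-- The twisted action on `M ⊗ C`: `act^M((m ⊗ c) ⊗ a) = Σ m·a_α ⊗ c^α`. -/
def actM (smul : M →ₗ[k] A →ₗ[k] M) (ψ : C ⊗[k] A →ₗ[k] A ⊗[k] C) :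
    (M ⊗[k] C) ⊗[k] A →ₗ[k] M ⊗[k] C :=
  LinearMap.rTensor C (TensorProduct.lift smul) ∘ₗ
    (TensorProduct.assoc k M A C).symm.toLinearMap ∘ₗ
    LinearMap.lTensor M ψ ∘ₗ
    (TensorProduct.assoc k M C A).toLinearMap

/-- `ν_M : M → M ⊗ C`, `ν_M(m) = (ρ_M ⊗ C)(m ⊗ e) = Σ_j m·a_j ⊗ c_j`
for `e = Σ_j a_j ⊗ c_j`. -/
def nuM (smul : M →ₗ[k] A →ₗ[k] M) (e : A ⊗[k] C) : M →ₗ[k] M ⊗[k] C :=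
  LinearMap.rTensor C (TensorProduct.lift smul) ∘ₗ
    (TensorProduct.assoc k M A C).symm.toLinearMap ∘ₗ
    (TensorProduct.mk k M (A ⊗[k] C)).flip e

lemma nuM_tmul (smul : M →ₗ[k] A →ₗ[k] M) (a : A) (c : C) (m : M) :
    nuM smul (a ⊗ₜ c) m = smul m a ⊗ₜ c := by
  simp [nuM]

lemma actM_tmul (smul : M →ₗ[k] A →ₗ[k] M) (ψ : C ⊗[k] A →ₗ[k] A ⊗[k] C)
    (m : M) (c : C) (a : A) :
    actM smul ψ ((m ⊗ₜ c) ⊗ₜ a) =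
      LinearMap.rTensor C (TensorProduct.lift smul)
        ((TensorProduct.assoc k M A C).symm (m ⊗ₜ ψ (c ⊗ₜ a))) := by
  simp [actM]

lemma act_tmul (ψ : C ⊗[k] A →ₗ[k] A ⊗[k] C) (a' : A) (c : C) (a : A) :
    act ψ ((a' ⊗ₜ c) ⊗ₜ a) =
      LinearMap.rTensor C (LinearMap.mul' k A)
        ((TensorProduct.assoc k A A C).symm (a' ⊗ₜ ψ (c ⊗ₜ a))) := by
  simp [act]

lemma nuM_add (smul : M →ₗ[k] A →ₗ[k] M) (x y : A ⊗[k] C) (m : M) :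
    nuM smul (x + y) m = nuM smul x m + nuM smul y m := by
  simp [nuM, TensorProduct.tmul_add]

theorem statement9 (ψ : C ⊗[k] A →ₗ[k] A ⊗[k] C)
    -- (i) ψ ∘ (C ⊗ μ) = (μ ⊗ C) ∘ (A ⊗ ψ) ∘ (ψ ⊗ A)
    (hmul : ∀ (c : C) (a b : A), ψ (c ⊗ₜ (a * b)) = act ψ (ψ (c ⊗ₜ a) ⊗ₜ b))
    -- (ii) (A ⊗ Δ) ∘ ψ = (ψ ⊗ C) ∘ (C ⊗ ψ) ∘ (Δ ⊗ A)
    (hcomul : LinearMap.lTensor A (Coalgebra.comul (R := k) (A := C)) ∘ₗ ψ =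
      (TensorProduct.assoc k A C C).toLinearMap ∘ₗ
        LinearMap.rTensor C ψ ∘ₗ
        (TensorProduct.assoc k C A C).symm.toLinearMap ∘ₗ
        LinearMap.lTensor C ψ ∘ₗ
        (TensorProduct.assoc k C C A).toLinearMap ∘ₗ
        LinearMap.rTensor A (Coalgebra.comul (R := k) (A := C)))
    -- (iii) ψ(c ⊗ 1) = 1 ⊗ c
    (hone : ∀ c : C, ψ (c ⊗ₜ (1 : A)) = (1 : A) ⊗ₜ c)
    -- (iv) (A ⊗ ε)(ψ(c ⊗ a)) = ε(c)a
    (hcounit : ∀ (c : C) (a : A),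
      epsA (ψ (c ⊗ₜ a)) = Coalgebra.counit (R := k) c • a)
    -- e is a normalized integral
    (e : A ⊗[k] C)
    (hInt : ∀ a : A, act ψ (e ⊗ₜ a) = lmul a e)
    (hNorm : epsA e = 1)
    -- M is a (k-compatible) right A-module
    (smulM : M →ₗ[k] A →ₗ[k] M)
    (hMone : ∀ m : M, smulM m 1 = m)
    (hMassoc : ∀ (m : M) (a b : A), smulM (smulM m a) b = smulM m (a * b))
    -- N is a (k-compatible) right A-module
    (smulN : N →ₗ[k] A →ₗ[k] N)
    (hNone : ∀ n : N, smulN n 1 = n)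
    (hNassoc : ∀ (n : N) (a b : A), smulN (smulN n a) b = smulN n (a * b)) :
    -- (1) (M ⊗ ε) ∘ ν_M = id
    (∀ m : M, epsM (nuM smulM e m) = m) ∧
    -- (2) ν_M(m·a) = act^M(ν_M(m) ⊗ a)
    (∀ (m : M) (a : A),
      nuM smulM e (smulM m a) = actM smulM ψ (nuM smulM e m ⊗ₜ a)) ∧
    -- (3) naturality: (f ⊗ C) ∘ ν_M = ν_N ∘ f for right A-linear f
    (∀ f : M →ₗ[k] N, (∀ (m : M) (a : A), f (smulM m a) = smulN (f m) a) →
      ∀ m : M, LinearMap.rTensor C f (nuM smulM e m) = nuM smulN e (f m)) := by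
  -- key lemma B: actM (Φ_m x ⊗ a) = Φ_m (act ψ (x ⊗ a))
  have keyB : ∀ (m : M) (a : A) (x : A ⊗[k] C),
      actM smulM ψ (nuM smulM x m ⊗ₜ a) = nuM smulM (act ψ (x ⊗ₜ a)) m := by
    intro m a x
    induction x using TensorProduct.induction_on with
    | zero => simp [nuM, act, actM]
    | tmul a' c =>
        rw [nuM_tmul, actM_tmul, act_tmul]
        induction ψ (c ⊗ₜ a) using TensorProduct.induction_on with
        | zero => simp [nuM]
        | tmul b c' => simp [nuM_tmul, hMassoc]
        | add y z hy hz =>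
            simp only [map_add, TensorProduct.tmul_add, nuM_add] at *
            rw [hy, hz]
    | add x y hx hy =>
        simp only [map_add, TensorProduct.add_tmul, nuM_add] at *
        rw [hx, hy]
  -- key lemma A: Φ_{m·a} x = Φ_m (lmul a x)
  have keyA : ∀ (m : M) (a : A) (x : A ⊗[k] C),
      nuM smulM x (smulM m a) = nuM smulM (lmul a x) m := by
    intro m a x
    induction x using TensorProduct.induction_on with
    | zero => simp [nuM, lmul]
    | tmul a' c => simp [nuM_tmul, lmul, hMassoc]
    | add x y hx hy =>
        simp only [map_add, nuM_add] at *
        rw [hx, hy]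
  refine ⟨?_, ?_, ?_⟩
  · -- (1)
    intro m
    have h : ∀ x : A ⊗[k] C, epsM (nuM smulM x m) = smulM m (epsA x) := by
      intro x
      induction x using TensorProduct.induction_on with
      | zero => simp [nuM, epsA]
      | tmul a c => simp [nuM_tmul, epsM, epsA, smul_tmul']
      | add x y hx hy =>
          simp only [map_add, nuM_add] at *
          rw [hx, hy]
    rw [h e, hNorm, hMone]
  · -- (2)
    intro m a
    rw [keyA m a e, ← hInt a, ← keyB]
  · -- (3)
    intro f hf m
    have h : ∀ x : A ⊗[k] C,
        LinearMap.rTensor C f (nuM smulM x m) = nuM smulN x (f m) := by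
      intro x
      induction x using TensorProduct.induction_on with
      | zero => simp [nuM]
      | tmul a c => simp [nuM_tmul, hf]
      | add x y hx hy =>
          simp only [map_add, nuM_add] at *
          rw [hx, hy]
    exact h e
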